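/- For standard cCSP processes P and Q, the lifted transition for parallel composition satisfies: (P ∥ Q) —t→ 0 if and only if there exist traces p, q such that t ∈ p ∥ q (the set of interleavings of the non-terminal parts of p and q followed by the synchronization ω₁ & ω₂ of their terminal events) with P —p→ 0 and Q —q→ 0. -/
import Mathlib


namespace CCSP

/-- Terminal events Ω = {✓, !, ?}. -/
inductive Omega : Type
  | tick | bang | quest
deriving DecidableEq

/-- Events: normal events from Σ or terminal events from Ω. -/
inductive Ev (σ : Type) : Type
  | norm (a : σ)
  | term (ω : Omega)

/-- Standard cCSP process terms (with the null process 0). -/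
inductive Proc (σ : Type) : Type
  | zero
  | atom (a : σ)
  | skip
  | throw
  | yield
  | seq (P Q : Proc σ)
  | choice (P Q : Proc σ)
  | par (P Q : Proc σ)

open Proc Ev Omega

/-- Synchronisation of terminal events: ω ∈ ω₁ & ω₂. -/
inductive Sync : Omega → Omega → Omega → Prop
  | tick : Sync .tick .tick .tick
  | bangL (ω : Omega) : Sync .bang ω .bang
  | bangR (ω : Omega) : Sync ω .bang .bang
  | quest : Sync .quest .quest .quest
  | questTick : Sync .quest .tick .tick
  | tickQuest : Sync .tick .quest .tick

variable {σ : Type}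

/-- Labelled transition system for standard processes. -/
inductive Step : Proc σ → Ev σ → Proc σ → Prop
  | atom (a : σ) : Step (atom a) (norm a) skip
  | skip : Step skip (term .tick) zero
  | throw : Step throw (term .bang) zero
  | yieldQ : Step yield (term .quest) zero
  | yieldT : Step yield (term .tick) zero
  | seqN {P P' Q : Proc σ} {a : σ} :
      Step P (norm a) P' → Step (seq P Q) (norm a) (seq P' Q)
  | seqT {P Q R : Proc σ} {e : Ev σ} :
      Step P (term .tick) zero → Step Q e R → Step (seq P Q) e R
  | seqA {P Q : Proc σ} {ω : Omega} :
      Step P (term ω) zero → ω ≠ .tick → Step (seq P Q) (term ω) zero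
  | chL {P Q R : Proc σ} {e : Ev σ} : Step P e R → Step (choice P Q) e R
  | chR {P Q R : Proc σ} {e : Ev σ} : Step Q e R → Step (choice P Q) e R
  | parL {P P' Q : Proc σ} {a : σ} :
      Step P (norm a) P' → Step (par P Q) (norm a) (par P' Q)
  | parR {P Q Q' : Proc σ} {a : σ} :
      Step Q (norm a) Q' → Step (par P Q) (norm a) (par P Q')
  | parT {P Q : Proc σ} {ω₁ ω₂ ω : Omega} :
      Step P (term ω₁) zero → Step Q (term ω₂) zero → Sync ω₁ ω₂ ω →
      Step (par P Q) (term ω) zero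

/-- A complete trace: a sequence of normal events followed by one terminal event. -/
abbrev Trace (σ : Type) := List σ × Omega

/-- Lifted transition relation over sequences of normal events ending in ω. -/
def Lift : Proc σ → List σ → Omega → Proc σ → Prop
  | P, [], ω, Q => Step P (term ω) Q
  | P, a :: t, ω, Q => ∃ P', Step P (norm a) P' ∧ Lift P' t ω Q

/-- Lifted transition relation over complete traces. -/
def LiftT (P : Proc σ) (t : Trace σ) (Q : Proc σ) : Prop := Lift P t.1 t.2 Q

/-- Derived traces: DT(P) = {t | P —t→ 0}. -/
def DT (P : Proc σ) : Set (Trace σ) := {t | LiftT P t zero}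

/-- Trace sequential composition: p ; q. -/
def tseq (p q : Trace σ) : Trace σ :=
  if p.2 = Omega.tick then (p.1 ++ q.1, q.2) else p

/-- Prefixing a normal event to a trace. -/
def tcons (a : σ) (p : Trace σ) : Trace σ := (a :: p.1, p.2)

/-- Interleaving of finite sequences: `Inter p q t` means t ∈ p ||| q. -/
inductive Inter : List σ → List σ → List σ → Prop
  | nil : Inter [] [] []
  | left {p q t : List σ} {a : σ} : Inter p q t → Inter (a :: p) q (a :: t)
  | right {p q t : List σ} {a : σ} : Inter p q t → Inter p (a :: q) (a :: t)

/-- Trace parallel composition: interleaving of the normal parts followed by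
    synchronisation of terminal events. -/
def tpar (p q : Trace σ) : Set (Trace σ) :=
  {t | Inter p.1 q.1 t.1 ∧ Sync p.2 q.2 t.2}

/-- Denotational trace semantics of standard processes. -/
def T : Proc σ → Set (Trace σ)
  | .zero => ∅
  | .atom a => {([a], .tick)}
  | .skip => {([], .tick)}
  | .throw => {([], .bang)}
  | .yield => {([], .quest), ([], .tick)}
  | .seq P Q => {t | ∃ p ∈ T P, ∃ q ∈ T Q, t = tseq p q}
  | .choice P Q => T P ∪ T Q
  | .par P Q => {t | ∃ p ∈ T P, ∃ q ∈ T Q, t ∈ tpar p q}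

/-- P is a process term of the language (built from atoms, SKIP, THROW, YIELD,
    sequential composition, choice and parallel composition; not 0). -/
def IsTerm : Proc σ → Prop
  | .zero => False
  | .atom _ => True
  | .skip => True
  | .throw => True
  | .yield => True
  | .seq P Q => IsTerm P ∧ IsTerm Q
  | .choice P Q => IsTerm P ∧ IsTerm Q
  | .par P Q => IsTerm P ∧ IsTerm Q


lemma lift_par_of {σ : Type} {p q t : List σ} (h : Inter p q t) :
    ∀ {P Q : Proc σ} {ω₁ ω₂ ω : Omega}, Lift P p ω₁ Proc.zero → Lift Q q ω₂ Proc.zero →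
      Sync ω₁ ω₂ ω → Lift (Proc.par P Q) t ω Proc.zero := by
  induction h with
  | nil => intro P Q ω₁ ω₂ ω h1 h2 hs; exact Step.parT h1 h2 hs
  | left _ ih =>
    intro P Q ω₁ ω₂ ω h1 h2 hs
    obtain ⟨P', hstep, hlift⟩ := h1
    exact ⟨_, Step.parL hstep, ih hlift h2 hs⟩
  | right _ ih =>
    intro P Q ω₁ ω₂ ω h1 h2 hs
    obtain ⟨Q', hstep, hlift⟩ := h2
    exact ⟨_, Step.parR hstep, ih h1 hlift hs⟩

lemma lift_par_inv {σ : Type} (t : List σ) :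
    ∀ {P Q : Proc σ} {ω : Omega}, Lift (Proc.par P Q) t ω Proc.zero →
      ∃ p q ω₁ ω₂, Inter p q t ∧ Sync ω₁ ω₂ ω ∧ Lift P p ω₁ Proc.zero ∧
        Lift Q q ω₂ Proc.zero := by
  induction t with
  | nil =>
    intro P Q ω h
    cases h with
    | parT h1 h2 hs => exact ⟨[], [], _, _, Inter.nil, hs, h1, h2⟩
  | cons a t ih =>
    intro P Q ω h
    obtain ⟨R, hstep, hlift⟩ := h
    cases hstep with
    | parL h =>
      obtain ⟨p, q, ω₁, ω₂, hi, hs, h1, h2⟩ := ih hlift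
      exact ⟨a :: p, q, ω₁, ω₂, Inter.left hi, hs, ⟨_, h, h1⟩, h2⟩
    | parR h =>
      obtain ⟨p, q, ω₁, ω₂, hi, hs, h1, h2⟩ := ih hlift
      exact ⟨p, a :: q, ω₁, ω₂, Inter.right hi, hs, h1, ⟨_, h, h2⟩⟩

/-- derived traces of parallel composition. -/
theorem par_derived_traces {σ : Type} (P Q : Proc σ) (t : Trace σ) :
    t ∈ DT (Proc.par P Q) ↔
      ∃ p q : Trace σ, t ∈ tpar p q ∧ p ∈ DT P ∧ q ∈ DT Q := by
  constructor
  · intro h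
    obtain ⟨p, q, ω₁, ω₂, hi, hs, h1, h2⟩ := lift_par_inv t.1 h
    exact ⟨(p, ω₁), (q, ω₂), ⟨hi, hs⟩, h1, h2⟩
  · rintro ⟨p, q, ⟨hi, hs⟩, h1, h2⟩
    exact lift_par_of hi h1 h2 hs
end CCSP
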